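/- A sequence (ε_1, ε_2, …) of non-negative integers is β-admissible if and only if for every i ≥ 1, the shifted sequence (ε_i, ε_{i+1}, …) is lexicographically strictly smaller than the infinite β-expansion ε*(1,β) of 1. -/

import Mathlib

open Filter MeasureTheory Set Topology

/-- The β-transformation T_β(x) = βx − ⌊βx⌋. -/
noncomputable def betaT (β : ℝ) : ℝ → ℝ := fun x => β * x - ⌊β * x⌋

/-- The (i+1)-th digit of the β-expansion of x (0-indexed). -/
noncomputable def betaDigit (β x : ℝ) (i : ℕ) : ℤ := ⌊β * (betaT β)^[i] x⌋

/-- A finite word is β-admissible if some x ∈ [0,1) has β-expansion beginning with it. -/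
def IsAdmissibleWord (β : ℝ) (w : List ℤ) : Prop :=
  ∃ x ∈ Set.Ico (0:ℝ) 1, ∀ i (h : i < w.length), w.get ⟨i, h⟩ = betaDigit β x i

/-- An infinite sequence is β-admissible if it is the digit sequence of some x ∈ [0,1). -/
def IsAdmissibleSeq (β : ℝ) (e : ℕ → ℤ) : Prop :=
  ∃ x ∈ Set.Ico (0:ℝ) 1, ∀ i, e i = betaDigit β x i

/-- The basic interval (cylinder) of a word. -/
def cylinder (β : ℝ) (w : List ℤ) : Set ℝ :=
  {x | x ∈ Set.Ico (0:ℝ) 1 ∧ ∀ i (h : i < w.length), betaDigit β x i = w.get ⟨i, h⟩}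

/-- A basic interval is full if its length is β^{-n}. -/
def IsFull (β : ℝ) (w : List ℤ) : Prop :=
  volume (cylinder β w) = ENNReal.ofReal (1 / β ^ w.length)

-- The infinite β-expansion of 1: the periodic modification if the expansion of 1
-- terminates, and the expansion of 1 itself otherwise (0-indexed).
open Classical in
noncomputable def betaStar (β : ℝ) : ℕ → ℤ :=
  if h : ∃ n, betaDigit β 1 n ≠ 0 ∧ ∀ i, n < i → betaDigit β 1 i = 0 then
    fun i =>
      if i % (h.choose + 1) = h.choose then betaDigit β 1 h.choose - 1
      else betaDigit β 1 (i % (h.choose + 1))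
  else betaDigit β 1

/-- Strict lexicographic order on integer sequences. -/
def lexLt (a b : ℕ → ℤ) : Prop := ∃ n, (∀ i, i < n → a i = b i) ∧ a n < b n

/-- l_n(β): the length of the longest run of zeros following the n-th digit
(1-indexed position n) in the infinite β-expansion of 1. -/
noncomputable def zeroRunLen (β : ℝ) (n : ℕ) : ℕ∞ :=
  ⨆ k ∈ {k : ℕ | ∀ j, j < k → betaStar β (n + j) = 0}, (k : ℕ∞)

/-- A₀: the set of bases β > 1 with bounded zero-runs in the expansion of 1. -/
def A0 : Set ℝ := {β | 1 < β ∧ ∃ C : ℕ, ∀ n, 1 ≤ n → zeroRunLen β n ≤ (C : ℕ∞)}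

/-- The waiting time W_n^β(x,y): first k ≥ 1 with T_β^k x in the n-th basic interval of y. -/
noncomputable def waitingTime (β x y : ℝ) (n : ℕ) : ℕ∞ :=
  sInf {k : ℕ∞ | ∃ m : ℕ, k = (m : ℕ∞) ∧ 1 ≤ m ∧
    ∀ i, i < n → betaDigit β ((betaT β)^[m] x) i = betaDigit β y i}

/-- (log W_n^β(x,y)) / n as an extended real, with value ⊤ when W_n = ∞. -/
noncomputable def waitingRatio (β x y : ℝ) (n : ℕ) : EReal :=
  if h : waitingTime β x y n = ⊤ then ⊤
  else (((Real.log ((waitingTime β x y n).untop h : ℕ)) / n : ℝ) : EReal)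

section ParryAux
variable {β : ℝ}

lemma betaT_eq (β x : ℝ) : betaT β x = Int.fract (β * x) := rfl

lemma betaT_mem (β x : ℝ) : betaT β x ∈ Set.Ico (0:ℝ) 1 := by
  rw [betaT_eq]; exact ⟨Int.fract_nonneg _, Int.fract_lt_one _⟩

lemma iterT_mem_Icc {x : ℝ} (hx : x ∈ Set.Icc (0:ℝ) 1) (k : ℕ) :
    (betaT β)^[k] x ∈ Set.Icc (0:ℝ) 1 := by
  cases k with
  | zero => simpa using hx
  | succ n =>
    rw [Function.iterate_succ_apply']
    exact ⟨(betaT_mem β _).1, (betaT_mem β _).2.le⟩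

lemma iterT_mem_Ico {x : ℝ} (hx : x ∈ Set.Ico (0:ℝ) 1) (k : ℕ) :
    (betaT β)^[k] x ∈ Set.Ico (0:ℝ) 1 := by
  cases k with
  | zero => simpa using hx
  | succ n => rw [Function.iterate_succ_apply']; exact betaT_mem β _

lemma betaT_iter_succ (β x : ℝ) (k : ℕ) :
    (betaT β)^[k+1] x = β * (betaT β)^[k] x - (betaDigit β x k : ℝ) := by
  rw [Function.iterate_succ_apply']; rfl

lemma digit_nonneg (hβ : 0 < β) {x : ℝ} (hx : x ∈ Set.Icc (0:ℝ) 1) (i : ℕ) :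
    0 ≤ betaDigit β x i :=
  Int.floor_nonneg.2 (mul_nonneg hβ.le (iterT_mem_Icc hx i).1)

lemma digit_le (hβ : 0 < β) {x : ℝ} (hx : x ∈ Set.Icc (0:ℝ) 1) (i : ℕ) :
    betaDigit β x i ≤ ⌊β⌋ := by
  apply Int.floor_le_floor
  have h1 := (iterT_mem_Icc (β := β) hx i).2
  nlinarith

lemma digit_shift (β x : ℝ) (k j : ℕ) :
    betaDigit β x (k + j) = betaDigit β ((betaT β)^[k] x) j := by
  unfold betaDigit
  rw [Nat.add_comm, Function.iterate_add_apply]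

lemma iter_zero (β : ℝ) (j : ℕ) : (betaT β)^[j] 0 = 0 := by
  induction j with
  | zero => rfl
  | succ n ih =>
    rw [Function.iterate_succ_apply', ih]
    simp [betaT]

/-- Digits are all bounded in [0, ⌊β⌋]. -/
def Dig (β : ℝ) (a : ℕ → ℤ) : Prop := ∀ i, 0 ≤ a i ∧ a i ≤ ⌊β⌋

lemma dig_digit (hβ : 0 < β) {x : ℝ} (hx : x ∈ Set.Icc (0:ℝ) 1) :
    Dig β (betaDigit β x) := fun i => ⟨digit_nonneg hβ hx i, digit_le hβ hx i⟩

noncomputable def sval (β : ℝ) (a : ℕ → ℤ) (k : ℕ) : ℝ := ∑' j : ℕ, (a (k+j) : ℝ) / β ^ (j+1)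

lemma summable_sval (hβ : 1 < β) {a : ℕ → ℤ} (ha : Dig β a) (k : ℕ) :
    Summable (fun j : ℕ => (a (k+j) : ℝ) / β ^ (j+1)) := by
  have hβ0 : (0:ℝ) < β := lt_trans one_pos hβ
  have h1 : (0:ℝ) ≤ 1/β := by positivity
  have h2 : 1/β < 1 := by rw [div_lt_one hβ0]; exact hβ
  refine Summable.of_nonneg_of_le (fun j => ?_) (fun j => ?_)
    ((summable_geometric_of_lt_one h1 h2).mul_left ((⌊β⌋:ℝ)/β))
  · have : (0:ℝ) ≤ (a (k+j):ℝ) := by exact_mod_cast (ha (k+j)).1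
    positivity
  · have hle : ((a (k+j):ℝ)) ≤ ((⌊β⌋:ℝ)) := by exact_mod_cast (ha (k+j)).2
    have he : ((⌊β⌋:ℝ)/β) * (1/β)^j = (⌊β⌋:ℝ)/β^(j+1) := by
      rw [div_pow, one_pow, div_mul_div_comm, mul_one, pow_succ]
      ring_nf
    rw [he]
    gcongr

lemma sval_nonneg (hβ : 1 < β) {a : ℕ → ℤ} (ha : Dig β a) (k : ℕ) : 0 ≤ sval β a k := by
  have hβ0 : (0:ℝ) < β := lt_trans one_pos hβ
  apply tsum_nonneg
  intro j
  have : (0:ℝ) ≤ (a (k+j):ℝ) := by exact_mod_cast (ha (k+j)).1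
  positivity

lemma sval_le (hβ : 1 < β) {a : ℕ → ℤ} (ha : Dig β a) (k : ℕ) :
    sval β a k ≤ (⌊β⌋:ℝ)/(β-1) := by
  have hβ0 : (0:ℝ) < β := lt_trans one_pos hβ
  have h1 : (0:ℝ) ≤ 1/β := by positivity
  have h2 : 1/β < 1 := by rw [div_lt_one hβ0]; exact hβ
  have hg : Summable (fun j:ℕ => ((⌊β⌋:ℝ)/β)*(1/β)^j) :=
    (summable_geometric_of_lt_one h1 h2).mul_left _
  have hbd : ∀ j : ℕ, ((a (k+j):ℝ))/β^(j+1) ≤ ((⌊β⌋:ℝ)/β)*(1/β)^j := by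
    intro j
    have hle : ((a (k+j):ℝ)) ≤ ((⌊β⌋:ℝ)) := by exact_mod_cast (ha (k+j)).2
    have he : ((⌊β⌋:ℝ)/β) * (1/β)^j = (⌊β⌋:ℝ)/β^(j+1) := by
      rw [div_pow, one_pow, div_mul_div_comm, mul_one, pow_succ]
      ring_nf
    rw [he]; gcongr
  have h := Summable.tsum_le_tsum hbd (summable_sval hβ ha k) hg
  rw [tsum_mul_left, tsum_geometric_of_lt_one h1 h2] at h
  refine le_trans h (le_of_eq ?_)
  have hβ1 : β - 1 ≠ 0 := by intro hc; linarith
  have hβn : β ≠ 0 := ne_of_gt hβ0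
  rw [show (1 - 1/β) = (β-1)/β by field_simp, inv_div]
  rw [div_mul_div_comm]
  field_simp

lemma sval_rec (hβ : 1 < β) {a : ℕ → ℤ} (ha : Dig β a) (k : ℕ) :
    sval β a k = ((a k : ℝ) + sval β a (k+1))/β := by
  have hβ0 : (0:ℝ) < β := lt_trans one_pos hβ
  have hβn : β ≠ 0 := ne_of_gt hβ0
  unfold sval
  rw [Summable.tsum_eq_zero_add (summable_sval hβ ha k)]
  have hcg : ∀ j:ℕ, ((a (k+(j+1)):ℝ))/β^(j+1+1) = ((a ((k+1)+j):ℝ))/β^(j+1) * (1/β) := by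
    intro j
    rw [show k+(j+1) = (k+1)+j by ring, pow_succ]
    field_simp
  rw [tsum_congr hcg, tsum_mul_right]
  simp only [Nat.zero_add, Nat.add_zero, pow_one]
  field_simp

lemma sval_split (hβ : 1 < β) {a : ℕ → ℤ} (ha : Dig β a) (k n : ℕ) :
    sval β a k = (∑ i ∈ Finset.range n, (a (k+i):ℝ)/β^(i+1)) + sval β a (k+n) / β^n := by
  have hβ0 : (0:ℝ) < β := lt_trans one_pos hβ
  have hβn : β ≠ 0 := ne_of_gt hβ0
  induction n with
  | zero => simp
  | succ n ih =>
    rw [ih, Finset.sum_range_succ, sval_rec hβ ha (k+n)]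
    have key : (((a (k+n):ℝ) + sval β a (k+n+1))/β)/β^n
        = (a (k+n):ℝ)/β^(n+1) + sval β a (k+n+1)/β^(n+1) := by
      rw [div_div, ← pow_succ', add_div]
    rw [key, show k + (n+1) = k + n + 1 from rfl]
    ring

lemma partial_le_sval (hβ : 1 < β) {a : ℕ → ℤ} (ha : Dig β a) (k N : ℕ) :
    ∑ i ∈ Finset.range N, ((a (k+i):ℝ))/β^(i+1) ≤ sval β a k := by
  have hβ0 : (0:ℝ) < β := lt_trans one_pos hβ
  apply Summable.sum_le_tsum _ (fun i _ => ?_) (summable_sval hβ ha k)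
  have : (0:ℝ) ≤ (a (k+i):ℝ) := by exact_mod_cast (ha (k+i)).1
  positivity

end ParryAux

section ParryAux2
variable {β : ℝ}

lemma tsum_digit (hβ : 1 < β) {x : ℝ} (hx : x ∈ Set.Icc (0:ℝ) 1) :
    sval β (betaDigit β x) 0 = x := by
  have hβ0 : (0:ℝ) < β := lt_trans one_pos hβ
  have hβn : β ≠ 0 := ne_of_gt hβ0
  have h1 : (0:ℝ) ≤ 1/β := by positivity
  have h2 : 1/β < 1 := by rw [div_lt_one hβ0]; exact hβ
  have hd : Dig β (betaDigit β x) := dig_digit hβ0 hx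
  have hpart : ∀ n, ∑ i ∈ Finset.range n, ((betaDigit β x i : ℝ)/β^(i+1))
      = x - (betaT β)^[n] x / β^n := by
    intro n
    induction n with
    | zero => simp
    | succ n ih =>
      rw [Finset.sum_range_succ, ih, betaT_iter_succ]
      have hbn : (β:ℝ)^n ≠ 0 := by positivity
      field_simp
      ring
  have hz : Tendsto (fun n : ℕ => (betaT β)^[n] x / β^n) atTop (𝓝 0) := by
    apply squeeze_zero (fun n => by
        have := (iterT_mem_Icc (β := β) hx n).1
        positivity)
      (fun n => ?_) (tendsto_pow_atTop_nhds_zero_of_lt_one h1 h2)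
    have hle := (iterT_mem_Icc (β := β) hx n).2
    rw [div_pow, one_pow]
    have hpn : (0:ℝ) < β^n := by positivity
    exact (div_le_div_iff_of_pos_right hpn).2 hle
  have hlim : Tendsto (fun n => ∑ i ∈ Finset.range n, ((betaDigit β x i:ℝ)/β^(i+1)))
      atTop (𝓝 x) := by
    have h := (tendsto_const_nhds (x := x) (f := atTop (α := ℕ))).sub hz
    rw [sub_zero] at h
    exact h.congr (fun n => (hpart n).symm)
  have hfun : (fun j : ℕ => (betaDigit β x (0+j) : ℝ)/β^(j+1))
      = fun j : ℕ => (betaDigit β x j : ℝ)/β^(j+1) := by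
    funext j; rw [Nat.zero_add]
  have hs : Summable (fun j : ℕ => (betaDigit β x j : ℝ)/β^(j+1)) := by
    rw [← hfun]; exact summable_sval hβ hd 0
  have := hs.hasSum.tendsto_sum_nat
  have hval := tendsto_nhds_unique this hlim
  unfold sval
  rw [hfun]
  exact hval

lemma sval_digit_iter (hβ : 1 < β) {x : ℝ} (hx : x ∈ Set.Icc (0:ℝ) 1) (k : ℕ) :
    sval β (betaDigit β x) k = (betaT β)^[k] x := by
  have h1 : sval β (betaDigit β x) k = sval β (betaDigit β ((betaT β)^[k] x)) 0 := by
    unfold sval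
    apply tsum_congr
    intro j
    rw [Nat.zero_add, ← digit_shift]
  rw [h1]
  exact tsum_digit hβ (iterT_mem_Icc hx k)

lemma digit_of_iter_zero {x : ℝ} {k : ℕ} (hk : (betaT β)^[k] x = 0) {i : ℕ} (h : k ≤ i) :
    betaDigit β x i = 0 := by
  have : i = k + (i - k) := by omega
  rw [this, digit_shift, hk]
  unfold betaDigit
  rw [iter_zero]
  simp

lemma lex_trichotomy (a b : ℕ → ℤ) : lexLt a b ∨ a = b ∨ lexLt b a := by
  by_cases hab : a = b
  · exact Or.inr (Or.inl hab)
  · have hne : ∃ n, a n ≠ b n := by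
      by_contra hc; push_neg at hc; exact hab (funext hc)
    have hn : a (Nat.find hne) ≠ b (Nat.find hne) := Nat.find_spec hne
    have hlt : ∀ i, i < Nat.find hne → a i = b i := fun i hi =>
      not_not.1 (Nat.find_min hne hi)
    rcases lt_or_gt_of_ne hn with h | h
    · exact Or.inl ⟨Nat.find hne, hlt, h⟩
    · exact Or.inr (Or.inr ⟨Nat.find hne, fun i hi => (hlt i hi).symm, h⟩)

end ParryAux2

section ParryAux3
variable {β : ℝ}

lemma betaStar_prop (hβ : 1 < β) :
    Dig β (betaStar β) ∧ sval β (betaStar β) 0 = 1 ∧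
      ∀ k, 0 < sval β (betaStar β) k ∧ sval β (betaStar β) k ≤ 1 := by
  have hβ0 : (0:ℝ) < β := lt_trans one_pos hβ
  have hβn : β ≠ 0 := ne_of_gt hβ0
  have h1x : (1:ℝ) ∈ Set.Icc (0:ℝ) 1 := ⟨zero_le_one, le_refl 1⟩
  have hd : Dig β (betaDigit β 1) := dig_digit hβ0 h1x
  by_cases h : ∃ n, betaDigit β 1 n ≠ 0 ∧ ∀ i, n < i → betaDigit β 1 i = 0
  case neg =>
    have hbs : betaStar β = betaDigit β 1 := by
      unfold betaStar; rw [dif_neg h]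
    rw [hbs]
    refine ⟨hd, tsum_digit hβ h1x, ?_⟩
    intro k
    rw [sval_digit_iter hβ h1x k]
    refine ⟨?_, (iterT_mem_Icc h1x k).2⟩
    rcases ((iterT_mem_Icc (β:=β) h1x k).1).lt_or_eq with hlt | heq
    · exact hlt
    · exfalso
      apply h
      have hz : ∀ i, k ≤ i → betaDigit β 1 i = 0 := fun i hi => digit_of_iter_zero heq.symm hi
      have hd0 : betaDigit β 1 0 ≠ 0 := by
        have hfl : (1:ℤ) ≤ ⌊β⌋ := by
          rw [Int.le_floor]; exact_mod_cast hβ.le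
        unfold betaDigit
        simp only [Function.iterate_zero, id_eq, mul_one]
        omega
      classical
      refine ⟨Nat.findGreatest (fun n => betaDigit β 1 n ≠ 0) k,
        Nat.findGreatest_spec (P := fun n => betaDigit β 1 n ≠ 0) (Nat.zero_le k) hd0, ?_⟩
      intro i hi
      by_cases hik : i ≤ k
      · exact not_not.1 (Nat.findGreatest_is_greatest hi hik)
      · exact hz i (by omega)
  case pos =>
    set m := h.choose with hmdef
    obtain ⟨hm1, hm2⟩ : betaDigit β 1 m ≠ 0 ∧ ∀ i, m < i → betaDigit β 1 i = 0 :=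
      h.choose_spec
    have hbs : betaStar β = fun i =>
        if i % (m + 1) = m then betaDigit β 1 m - 1 else betaDigit β 1 (i % (m + 1)) := by
      unfold betaStar
      rw [dif_pos h, hmdef]
    have hTp : (betaT β)^[m+1] 1 = 0 := by
      have h01 := iterT_mem_Icc (β := β) h1x (m+1)
      have h2 : sval β (betaDigit β ((betaT β)^[m+1] 1)) 0 = 0 := by
        have hterms : ∀ j : ℕ, ((betaDigit β ((betaT β)^[m+1] 1) (0+j) : ℝ))/β^(j+1) = 0 := by
          intro j
          rw [Nat.zero_add, ← digit_shift]
          rw [hm2 (m+1+j) (by omega)]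
          simp
        calc sval β (betaDigit β ((betaT β)^[m+1] 1)) 0 = ∑' (_:ℕ), (0:ℝ) :=
              tsum_congr hterms
          _ = 0 := tsum_zero
      exact (tsum_digit hβ h01).symm.trans h2
    have hβTm : β * (betaT β)^[m] 1 = (betaDigit β 1 m : ℝ) := by
      have hh := betaT_iter_succ β 1 m
      rw [hTp] at hh; linarith
    have hdm1 : 1 ≤ betaDigit β 1 m := by
      have h0 := (hd m).1; omega
    have hdigt : Dig β (betaStar β) := by
      intro i
      rw [hbs]
      dsimp only
      split_ifs with hc
      · exact ⟨by omega, by have := (hd m).2; omega⟩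
      · exact hd _
    have hw_pos : ∀ r, r ≤ m → 0 < (betaT β)^[r] 1 := by
      intro r hr
      rcases ((iterT_mem_Icc (β:=β) h1x r).1).lt_or_eq with hlt | heq
      · exact hlt
      · exfalso
        have hTm : (betaT β)^[m] 1 = 0 := by
          rw [show m = (m - r) + r by omega, Function.iterate_add_apply, ← heq, iter_zero]
        apply hm1
        unfold betaDigit
        rw [hTm]
        simp
    have hwrec : ∀ k, β * (betaT β)^[k % (m+1)] 1
        = (betaStar β k : ℝ) + (betaT β)^[(k+1) % (m+1)] 1 := by
      intro k
      have hrlt : k % (m+1) < m + 1 := Nat.mod_lt _ (Nat.succ_pos m)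
      rw [hbs]
      dsimp only
      by_cases hc : k % (m+1) = m
      · rw [if_pos hc]
        have hnext : (k+1) % (m+1) = 0 := by
          rcases Nat.eq_zero_or_pos m with hm0 | hm0
          · rw [hm0]; exact Nat.mod_one _
          · rw [Nat.add_mod, hc, Nat.mod_eq_of_lt (show 1 < m + 1 by omega)]
            exact Nat.mod_self _
        rw [hnext, hc]
        simp only [Function.iterate_zero, id_eq]
        push_cast
        rw [hβTm]
        ring
      · rw [if_neg hc]
        have hrm : k % (m+1) < m := by omega
        have hnext : (k+1) % (m+1) = k % (m+1) + 1 := by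
          rw [Nat.add_mod, Nat.mod_eq_of_lt (show 1 < m + 1 by omega),
            Nat.mod_eq_of_lt (show k % (m+1) + 1 < m + 1 by omega)]
        rw [hnext]
        have hh := betaT_iter_succ β 1 (k % (m+1))
        linarith
    have hkey : ∀ k, sval β (betaStar β) k = (betaT β)^[k % (m+1)] 1 := by
      intro k
      have hdelta : ∀ j : ℕ, sval β (betaStar β) k - (betaT β)^[k % (m+1)] 1
          = (sval β (betaStar β) (k+j) - (betaT β)^[(k+j) % (m+1)] 1)/β^j := by
        intro j
        induction j with
        | zero => simp
        | succ j ih =>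
          have e1 := sval_rec hβ hdigt (k+j)
          have e2 : (betaT β)^[(k+j) % (m+1)] 1
              = ((betaStar β (k+j) : ℝ) + (betaT β)^[(k+j+1) % (m+1)] 1)/β := by
            rw [eq_div_iff hβn]
            linarith [hwrec (k+j)]
          have e3 : sval β (betaStar β) (k+j) - (betaT β)^[(k+j) % (m+1)] 1
              = (sval β (betaStar β) (k+j+1) - (betaT β)^[(k+j+1) % (m+1)] 1)/β := by
            rw [e1, e2]; ring
          rw [show k + (j+1) = k + j + 1 from rfl, ih, e3, pow_succ]
          ring
      have hg1 : (0:ℝ) ≤ 1/β := by positivity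
      have hg2 : 1/β < 1 := by rw [div_lt_one hβ0]; exact hβ
      have hlim : Tendsto (fun j : ℕ => (((⌊β⌋:ℝ)/(β-1) + 1)) * (1/β)^j) atTop (𝓝 0) := by
        have := (tendsto_pow_atTop_nhds_zero_of_lt_one hg1 hg2).const_mul
          (((⌊β⌋:ℝ)/(β-1) + 1))
        simpa using this
      have hbd : ∀ j : ℕ, |sval β (betaStar β) k - (betaT β)^[k % (m+1)] 1|
          ≤ (((⌊β⌋:ℝ)/(β-1) + 1)) * (1/β)^j := by
        intro j
        have hu0 := sval_nonneg hβ hdigt (k+j)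
        have hu1 := sval_le hβ hdigt (k+j)
        have hw0 := hw_pos ((k+j) % (m+1)) (Nat.lt_succ_iff.1 (Nat.mod_lt _ (Nat.succ_pos m)))
        have hw1 := (iterT_mem_Icc (β:=β) h1x ((k+j) % (m+1))).2
        have habs : |sval β (betaStar β) (k+j) - (betaT β)^[(k+j) % (m+1)] 1|
            ≤ (⌊β⌋:ℝ)/(β-1) + 1 := by
          rw [abs_le]
          constructor <;> linarith
        rw [hdelta j, abs_div, abs_of_pos (show (0:ℝ) < β^j by positivity),
          div_pow, one_pow, mul_one_div]
        gcongr
      have habs0 : |sval β (betaStar β) k - (betaT β)^[k % (m+1)] 1| ≤ 0 :=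
        ge_of_tendsto' hlim hbd
      have := abs_nonpos_iff.1 habs0
      linarith [sub_eq_zero.1 this]
    refine ⟨hdigt, ?_, ?_⟩
    · rw [hkey 0]
      simp
    · intro k
      rw [hkey k]
      exact ⟨hw_pos _ (Nat.lt_succ_iff.1 (Nat.mod_lt _ (Nat.succ_pos m))),
        (iterT_mem_Icc h1x _).2⟩

end ParryAux3

section ParryMain
variable {β : ℝ}

/-- If `a` shifted by `k` agrees with `t` up to `n` and drops strictly below at `n`,
its `(n+1)`-block value is at most the `t`-block value minus `β^{-(n+1)}`. -/
lemma block_le (hβ : 1 < β) {a t : ℕ → ℤ} (k n : ℕ)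
    (hp : ∀ i, i < n → a (k+i) = t i) (hl : a (k+n) < t n) :
    ∑ i ∈ Finset.range (n+1), ((a (k+i):ℝ))/β^(i+1)
      ≤ (∑ i ∈ Finset.range (n+1), ((t (0+i):ℝ))/β^(i+1)) - 1/β^(n+1) := by
  have hβ0 : (0:ℝ) < β := lt_trans one_pos hβ
  rw [Finset.sum_range_succ, Finset.sum_range_succ]
  have hcong : ∀ i ∈ Finset.range n, ((a (k+i):ℝ))/β^(i+1) = ((t (0+i):ℝ))/β^(i+1) := by
    intro i hi
    rw [hp i (Finset.mem_range.1 hi), Nat.zero_add]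
  rw [Finset.sum_congr rfl hcong]
  have hc : ((a (k+n):ℝ)) ≤ ((t (0+n):ℝ)) - 1 := by
    rw [Nat.zero_add]
    have h2 : a (k+n) + 1 ≤ t n := Int.add_one_le_iff.2 hl
    have h' : ((a (k+n):ℝ)) + 1 ≤ ((t n:ℝ)) := by exact_mod_cast h2
    linarith
  have hpow : (0:ℝ) < β^(n+1) := by positivity
  have hlast : ((a (k+n):ℝ))/β^(n+1) ≤ ((t (0+n):ℝ))/β^(n+1) - 1/β^(n+1) := by
    rw [div_sub_div_same]
    gcongr
  linarith

end ParryMain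

/-- Parry's criterion: a sequence is β-admissible iff every shift is lexicographically
strictly smaller than the infinite β-expansion of 1. -/
theorem parry_criterion (β : ℝ) (hβ : 1 < β) (e : ℕ → ℤ) (he : ∀ i, 0 ≤ e i) :
    IsAdmissibleSeq β e ↔ ∀ i : ℕ, lexLt (fun j => e (i + j)) (betaStar β) := by
  have hβ0 : (0:ℝ) < β := lt_trans one_pos hβ
  have hβn : β ≠ 0 := ne_of_gt hβ0
  obtain ⟨hdigT, hsval1, hsvalk⟩ := betaStar_prop (β := β) hβ
  constructor
  · rintro ⟨x, hx, hxe⟩ k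
    have hxI : x ∈ Set.Icc (0:ℝ) 1 := ⟨hx.1, hx.2.le⟩
    have hyI : (betaT β)^[k] x ∈ Set.Ico (0:ℝ) 1 := iterT_mem_Ico hx k
    have hyI' : (betaT β)^[k] x ∈ Set.Icc (0:ℝ) 1 := ⟨hyI.1, hyI.2.le⟩
    have heq : (fun j => e (k+j)) = fun j => betaDigit β ((betaT β)^[k] x) j := by
      funext j; rw [hxe (k+j), digit_shift]
    rw [heq]
    have hda : Dig β (betaDigit β ((betaT β)^[k] x)) := dig_digit hβ0 hyI'
    have hvala : sval β (betaDigit β ((betaT β)^[k] x)) 0 = (betaT β)^[k] x :=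
      tsum_digit hβ hyI'
    rcases lex_trichotomy (betaDigit β ((betaT β)^[k] x)) (betaStar β) with hlex | hlex | hlex
    · exact hlex
    · exfalso
      rw [hlex, hsval1] at hvala
      linarith [hyI.2]
    · exfalso
      obtain ⟨n, hpre, hlt⟩ := hlex
      have hblock := block_le hβ (a := betaStar β) (t := betaDigit β ((betaT β)^[k] x))
        0 n (fun i hi => by rw [Nat.zero_add]; exact hpre i hi) (by rw [Nat.zero_add]; exact hlt)
      have e1 := sval_split hβ hda 0 (n+1)
      have e2 := sval_split hβ hdigT 0 (n+1)
      have hta := sval_nonneg hβ hda (0+(n+1))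
      have htt := (hsvalk (0+(n+1))).2
      have hpow : (0:ℝ) < β^(n+1) := by positivity
      have hdivle : sval β (betaStar β) (0+(n+1))/β^(n+1) ≤ 1/β^(n+1) := by gcongr
      have hge : (1:ℝ) ≤ sval β (betaDigit β ((betaT β)^[k] x)) 0 := by
        calc (1:ℝ) = sval β (betaStar β) 0 := hsval1.symm
          _ = (∑ i ∈ Finset.range (n+1), ((betaStar β (0+i):ℝ))/β^(i+1))
              + sval β (betaStar β) (0+(n+1))/β^(n+1) := e2
          _ ≤ (∑ i ∈ Finset.range (n+1), ((betaDigit β ((betaT β)^[k] x) (0+i):ℝ))/β^(i+1))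
              - 1/β^(n+1) + 1/β^(n+1) := by linarith
          _ = ∑ i ∈ Finset.range (n+1), ((betaDigit β ((betaT β)^[k] x) (0+i):ℝ))/β^(i+1) := by
              ring
          _ ≤ _ := by
              rw [e1]
              have : 0 ≤ sval β (betaDigit β ((betaT β)^[k] x)) (0+(n+1))/β^(n+1) := by
                positivity
              linarith
      rw [hvala] at hge
      linarith [hyI.2]
  · intro hlex
    have hdigE : Dig β e := by
      intro i
      refine ⟨he i, ?_⟩
      have h0 : e i ≤ betaStar β 0 := by
        obtain ⟨n, hp, hl⟩ := hlex i
        cases n with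
        | zero =>
          have h2 : e i < betaStar β 0 := hl
          omega
        | succ n =>
          have h2 : e i = betaStar β 0 := hp 0 (Nat.succ_pos n)
          omega
      have h1 := (hdigT 0).2
      omega
    have hpartial : ∀ N k, ∑ i ∈ Finset.range N, ((e (k+i):ℝ))/β^(i+1) ≤ 1 := by
      intro N
      induction N using Nat.strong_induction_on with
      | _ N IH =>
        intro k
        obtain ⟨n, hp, hl⟩ := hlex k
        replace hp : ∀ i, i < n → e (k+i) = betaStar β i := hp
        replace hl : e (k+n) < betaStar β n := hl
        by_cases hNn : N ≤ n
        · have hcong : ∀ i ∈ Finset.range N,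
              ((e (k+i):ℝ))/β^(i+1) = ((betaStar β (0+i):ℝ))/β^(i+1) := by
            intro i hi
            rw [hp i (lt_of_lt_of_le (Finset.mem_range.1 hi) hNn), Nat.zero_add]
          rw [Finset.sum_congr rfl hcong]
          exact le_trans (partial_le_sval hβ hdigT 0 N) (le_of_eq hsval1)
        · push_neg at hNn
          have hNe : N = (n+1) + (N - (n+1)) := by omega
          rw [hNe, Finset.sum_range_add]
          have hsecond : ∑ j ∈ Finset.range (N-(n+1)), ((e (k+((n+1)+j)):ℝ))/β^(((n+1)+j)+1)
              = (∑ j ∈ Finset.range (N-(n+1)), ((e ((k+n+1)+j):ℝ))/β^(j+1)) / β^(n+1) := by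
            rw [Finset.sum_div]
            apply Finset.sum_congr rfl
            intro j _
            rw [show k+((n+1)+j) = (k+n+1)+j by ring,
              show ((n+1)+j)+1 = (j+1)+(n+1) by ring, pow_add, ← div_div]
          rw [hsecond]
          have hIH : ∑ j ∈ Finset.range (N-(n+1)), ((e ((k+n+1)+j):ℝ))/β^(j+1) ≤ 1 :=
            IH (N-(n+1)) (by omega) (k+n+1)
          have hblock := block_le hβ k n hp hl
          have htpart : ∑ i ∈ Finset.range (n+1), ((betaStar β (0+i):ℝ))/β^(i+1) ≤ 1 :=
            le_trans (partial_le_sval hβ hdigT 0 (n+1)) (le_of_eq hsval1)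
          have hpow : (0:ℝ) < β^(n+1) := by positivity
          have hdivIH : (∑ j ∈ Finset.range (N-(n+1)), ((e ((k+n+1)+j):ℝ))/β^(j+1))/β^(n+1)
              ≤ 1/β^(n+1) := by gcongr
          linarith
    have hsle : ∀ k, sval β e k ≤ 1 := by
      intro k
      exact le_of_tendsto ((summable_sval hβ hdigE k).hasSum.tendsto_sum_nat)
        (Filter.Eventually.of_forall (fun N => hpartial N k))
    have hslt : ∀ k, sval β e k < 1 := by
      intro k
      obtain ⟨n, hp, hl⟩ := hlex k
      replace hp : ∀ i, i < n → e (k+i) = betaStar β i := hp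
      replace hl : e (k+n) < betaStar β n := hl
      have e1 := sval_split hβ hdigE k (n+1)
      have e2 := sval_split hβ hdigT 0 (n+1)
      have hblock := block_le hβ k n hp hl
      have hpow : (0:ℝ) < β^(n+1) := by positivity
      have h3 : sval β e (k+(n+1)) ≤ 1 := hsle _
      have h3' : sval β e (k+(n+1))/β^(n+1) ≤ 1/β^(n+1) := by gcongr
      have h4 : 0 < sval β (betaStar β) (0+(n+1)) := (hsvalk _).1
      have h4' : 0 < sval β (betaStar β) (0+(n+1))/β^(n+1) := by positivity
      calc sval β e k
          = (∑ i ∈ Finset.range (n+1), ((e (k+i):ℝ))/β^(i+1)) + sval β e (k+(n+1))/β^(n+1) := e1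
        _ ≤ ((∑ i ∈ Finset.range (n+1), ((betaStar β (0+i):ℝ))/β^(i+1)) - 1/β^(n+1))
            + 1/β^(n+1) := by linarith
        _ = ∑ i ∈ Finset.range (n+1), ((betaStar β (0+i):ℝ))/β^(i+1) := by ring
        _ = 1 - sval β (betaStar β) (0+(n+1))/β^(n+1) := by
            rw [← hsval1, e2]; ring
        _ < 1 := by linarith
    have hrec : ∀ k, β * sval β e k = (e k : ℝ) + sval β e (k+1) := by
      intro k
      rw [sval_rec hβ hdigE k]
      field_simp
    have hiter : ∀ k, (betaT β)^[k] (sval β e 0) = sval β e k := by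
      intro k
      induction k with
      | zero => rfl
      | succ k ih =>
        rw [Function.iterate_succ_apply', ih, betaT_eq, hrec k, Int.fract_intCast_add]
        exact Int.fract_eq_self.2 ⟨sval_nonneg hβ hdigE (k+1), hslt (k+1)⟩
    refine ⟨sval β e 0, ⟨sval_nonneg hβ hdigE 0, hslt 0⟩, ?_⟩
    intro i
    unfold betaDigit
    rw [hiter i, hrec i, Int.floor_intCast_add,
      Int.floor_eq_zero_iff.2 ⟨sval_nonneg hβ hdigE (i+1), hslt (i+1)⟩, add_zero]
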